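/- If q = 2^f with f ≥ 3, then q^4 is the largest prime power dividing q^4 (q^2 + 1)(q^2 - 1)^2 = |Sp_4(q)|; that is, every prime power divisor of q^4 (q^2+1)(q+1)^2(q-1)^2 is at most q^4. -/
import Mathlib


/-- For `q = 2 ^ f` with `f ≥ 3`, every prime power divisor of
`q ^ 4 * (q ^ 2 + 1) * (q + 1) ^ 2 * (q - 1) ^ 2 = |Sp₄(q)|` is at most `q ^ 4`. -/
theorem prime_power_divisor_sp4_le (f : ℕ) (hf : 3 ≤ f) (p k : ℕ) (hp : p.Prime)
    (hdvd : p ^ k ∣ (2 ^ f) ^ 4 * ((2 ^ f) ^ 2 + 1) * (2 ^ f + 1) ^ 2 * (2 ^ f - 1) ^ 2) :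
    p ^ k ≤ (2 ^ f) ^ 4 := by
  set q : ℕ := 2 ^ f with hqdef
  have hq : 8 ≤ q := by
    calc (8:ℕ) = 2 ^ 3 := by norm_num
    _ ≤ 2 ^ f := Nat.pow_le_pow_right (by norm_num) hf
  have hq4pos : 0 < q ^ 4 := by positivity
  have hqeven : 2 ∣ q := dvd_pow_self 2 (by omega : f ≠ 0)
  -- oddness of the factors
  have hAodd : ¬ (2 ∣ q ^ 2 + 1) := by
    intro h
    have : 2 ∣ q ^ 2 := Dvd.dvd.mul_right hqeven q |>.trans (by rw [sq])
    omega
  have hBodd : ¬ (2 ∣ q + 1) := by omega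
  have hCodd : ¬ (2 ∣ q - 1) := by omega
  have hfactor : (q + 1) * (q - 1) = q ^ 2 - 1 := by
    have h1 : 1 ≤ q := by omega
    have h2 : 1 ≤ q ^ 2 := Nat.one_le_pow _ _ (by omega)
    zify [h1, h2]
    ring
  by_cases hp2 : p = 2
  · -- p = 2 : the odd part is coprime to 2^k
    subst hp2
    have hcop : Nat.Coprime (2 ^ k) ((q ^ 2 + 1) * ((q + 1) ^ 2 * (q - 1) ^ 2)) := by
      apply Nat.Coprime.pow_left
      refine Nat.Coprime.mul_right ?_ (Nat.Coprime.mul_right ?_ ?_) <;>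
        apply (Nat.prime_two.coprime_iff_not_dvd).mpr
      · exact hAodd
      · intro h; exact hBodd (Nat.prime_two.dvd_of_dvd_pow h)
      · intro h; exact hCodd (Nat.prime_two.dvd_of_dvd_pow h)
    have hdvd' : 2 ^ k ∣ q ^ 4 * ((q ^ 2 + 1) * ((q + 1) ^ 2 * (q - 1) ^ 2)) := by
      have := hdvd; rw [show q ^ 4 * (q ^ 2 + 1) * (q + 1) ^ 2 * (q - 1) ^ 2
        = q ^ 4 * ((q ^ 2 + 1) * ((q + 1) ^ 2 * (q - 1) ^ 2)) by ring] at this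
      exact this
    exact Nat.le_of_dvd hq4pos (hcop.dvd_of_dvd_mul_right hdvd')
  · -- p odd
    have hpne2 : p ≠ 2 := hp2
    have hcpq : Nat.Coprime p q :=
      Nat.Coprime.pow_right f ((Nat.coprime_primes hp Nat.prime_two).mpr hpne2)
    have hcopq : Nat.Coprime (p ^ k) (q ^ 4) := hcpq.pow k 4
    -- p divides at most one of q^2+1, q+1, q-1
    have hdvd2 : ∀ a b : ℕ, p ∣ a → p ∣ b → a - b = 2 → False := by
      intro a b ha hb hab
      have hdv : p ∣ 2 := hab ▸ Nat.dvd_sub ha hb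
      have hle := Nat.le_of_dvd (by norm_num) hdv
      have h2 := hp.two_le
      omega
    have hq2 : q ^ 2 + 1 - (q ^ 2 - 1) = 2 := by
      have h1 : 1 ≤ q ^ 2 := Nat.one_le_pow _ _ (by omega)
      omega
    have hqsq : 64 ≤ q ^ 2 := by nlinarith
    have hq24 : q ^ 2 ≤ q ^ 4 := Nat.pow_le_pow_right (by omega) (by norm_num)
    by_cases hB : p ∣ q + 1
    · -- p^k ∣ (q+1)^2
      have hnC : ¬ p ∣ q - 1 := fun hC => hdvd2 _ _ hB hC (by omega)
      have hnA : ¬ p ∣ q ^ 2 + 1 := by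
        intro hA
        have : p ∣ q ^ 2 - 1 := hfactor ▸ Dvd.dvd.mul_right hB _
        exact hdvd2 _ _ hA this hq2
      have hcopA : Nat.Coprime (p ^ k) (q ^ 2 + 1) :=
        Nat.Coprime.pow_left _ ((hp.coprime_iff_not_dvd).mpr hnA)
      have hcopC : Nat.Coprime (p ^ k) ((q - 1) ^ 2) :=
        (((hp.coprime_iff_not_dvd).mpr hnC).pow k 2 : Nat.Coprime (p ^ k) ((q - 1) ^ 2))
      have h1 : p ^ k ∣ q ^ 4 * (q ^ 2 + 1) * (q + 1) ^ 2 :=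
        hcopC.dvd_of_dvd_mul_right hdvd
      have h2 : p ^ k ∣ (q + 1) ^ 2 :=
        Nat.Coprime.dvd_of_dvd_mul_left (hcopq.mul_right hcopA) h1
      have hle : p ^ k ≤ (q + 1) ^ 2 := Nat.le_of_dvd (by positivity) h2
      have h5 : q + 1 ≤ q ^ 2 := by nlinarith
      have h6 : (q + 1) ^ 2 ≤ (q ^ 2) ^ 2 := Nat.pow_le_pow_left h5 2
      have h7 : (q ^ 2) ^ 2 = q ^ 4 := by ring
      omega
    · by_cases hC : p ∣ q - 1
      · have hnA : ¬ p ∣ q ^ 2 + 1 := by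
          intro hA
          have : p ∣ q ^ 2 - 1 := hfactor ▸ Dvd.dvd.mul_left hC _
          exact hdvd2 _ _ hA this hq2
        have hcopA : Nat.Coprime (p ^ k) (q ^ 2 + 1) :=
          Nat.Coprime.pow_left _ ((hp.coprime_iff_not_dvd).mpr hnA)
        have hcopB : Nat.Coprime (p ^ k) ((q + 1) ^ 2) :=
          (((hp.coprime_iff_not_dvd).mpr hB).pow k 2 : Nat.Coprime (p ^ k) ((q + 1) ^ 2))
        have h2 : p ^ k ∣ (q - 1) ^ 2 :=
          Nat.Coprime.dvd_of_dvd_mul_left ((hcopq.mul_right hcopA).mul_right hcopB) hdvd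
        have hle : p ^ k ≤ (q - 1) ^ 2 :=
          Nat.le_of_dvd (pow_pos (by omega) 2) h2
        have h3 : (q - 1) ^ 2 ≤ q ^ 2 := Nat.pow_le_pow_left (Nat.sub_le q 1) 2
        omega
      · -- p^k ∣ q^2 + 1
        have hcopB : Nat.Coprime (p ^ k) ((q + 1) ^ 2) :=
          (((hp.coprime_iff_not_dvd).mpr hB).pow k 2 : Nat.Coprime (p ^ k) ((q + 1) ^ 2))
        have hcopC : Nat.Coprime (p ^ k) ((q - 1) ^ 2) :=
          (((hp.coprime_iff_not_dvd).mpr hC).pow k 2 : Nat.Coprime (p ^ k) ((q - 1) ^ 2))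
        have h1 : p ^ k ∣ q ^ 4 * (q ^ 2 + 1) :=
          hcopB.dvd_of_dvd_mul_right (hcopC.dvd_of_dvd_mul_right hdvd)
        have h2 : p ^ k ∣ q ^ 2 + 1 := hcopq.dvd_of_dvd_mul_left h1
        have hle : p ^ k ≤ q ^ 2 + 1 := Nat.le_of_dvd (by positivity) h2
        have h6 : q ^ 2 + 1 ≤ (q ^ 2) ^ 2 := by nlinarith
        have h7 : (q ^ 2) ^ 2 = q ^ 4 := by ring
        omega
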